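/- Let X, Y, S be topological spaces, f : X → S continuous, and g : Y → S a continuous surjective open map all of whose fibres g⁻¹({s}) are connected. If X is connected, then the topological fibre product X ×_S Y = {(x, y) ∈ X × Y : f(x) = g(y)} (with the subspace topology from X × Y) is connected. -/

import Mathlib

/-!
The projection `X ×_S Y → X` is the base change of `g` along `f`, so it inherits from `g`
openness, surjectivity and connected fibres (its fibre over `x` is a copy of `g ⁻¹' {f x}`).
A continuous open surjection is a quotient map, and a quotient map with connected fibres onto
a connected space has connected domain.
-/

open Set Topology TopologicalSpace

theorem Topology.IsCoinducing.connectedSpace {α β : Type*} [TopologicalSpace α]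
    [TopologicalSpace β] [ConnectedSpace β] {f : α → β} (hf : IsCoinducing f)
    (hfib : ∀ y, IsConnected (f ⁻¹' {y})) : ConnectedSpace α :=
  connectedSpace_iff_univ.2 <|
    hf.isConnected_preimage_of_isClosed hfib isClosed_univ isConnected_univ

section FiberProduct

variable {X Y S : Type*} {f : X → S} {g : Y → S}

theorem image_fst_prod_inter_setOf_eq (u : Set X) (v : Set Y) :
    Prod.fst '' (u ×ˢ v ∩ {p : X × Y | f p.1 = g p.2}) = u ∩ f ⁻¹' (g '' v) := by
  ext x
  constructor
  · rintro ⟨⟨x, y⟩, ⟨⟨hx, hy⟩, hxy⟩, rfl⟩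
    exact ⟨hx, y, hy, hxy.symm⟩
  · rintro ⟨hx, y, hy, hxy⟩
    exact ⟨(x, y), ⟨⟨hx, hy⟩, hxy.symm⟩, rfl⟩

variable [TopologicalSpace X] [TopologicalSpace Y]

theorem isConnected_fiberProduct_fst_preimage_singleton {x : X}
    (hfib : IsConnected (g ⁻¹' {f x})) :
    IsConnected ((fun z : {p : X × Y | f p.1 = g p.2} ↦ z.1.1) ⁻¹' {x}) := by
  have : ConnectedSpace (g ⁻¹' {f x}) := isConnected_iff_connectedSpace.1 hfib
  convert isConnected_range (f := fun y : g ⁻¹' {f x} ↦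
    (⟨(x, y), y.2.symm⟩ : {p : X × Y | f p.1 = g p.2})) (by fun_prop)
  ext ⟨⟨x', y⟩, hxy⟩
  constructor
  · rintro rfl
    exact ⟨⟨y, hxy.symm⟩, rfl⟩
  · rintro ⟨_, h⟩
    cases h
    rfl

variable [TopologicalSpace S]

theorem isOpenMap_fiberProduct_fst (hf : Continuous f) (hg : IsOpenMap g) :
    IsOpenMap fun z : {p : X × Y | f p.1 = g p.2} ↦ z.1.1 := by
  refine (isTopologicalBasis_subtype
    (isTopologicalBasis_opens.prod isTopologicalBasis_opens) _).isOpenMap_iff.2 ?_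
  rintro _ ⟨_, ⟨u, hu, v, hv, rfl⟩, rfl⟩
  rw [← image_image Prod.fst Subtype.val, Subtype.image_preimage_coe, inter_comm,
    image_fst_prod_inter_setOf_eq]
  exact hu.inter (hf.isOpen_preimage _ (hg v hv))

end FiberProduct

theorem isConnected_fiberProduct_general {X Y S : Type*} [TopologicalSpace X]
    [TopologicalSpace Y] [TopologicalSpace S] {f : X → S} {g : Y → S}
    (hf : Continuous f) (hgopen : IsOpenMap g) (hfib : ∀ s : S, IsConnected (g ⁻¹' {s}))
    (hX : ConnectedSpace X) :
    IsConnected {p : X × Y | f p.1 = g p.2} := by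
  set p := fun z : {p : X × Y | f p.1 = g p.2} ↦ z.1.1
  have hpfib (x : X) : IsConnected (p ⁻¹' {x}) :=
    isConnected_fiberProduct_fst_preimage_singleton (hfib (f x))
  have hp : IsOpenQuotientMap p :=
    ⟨fun x ↦ (hpfib x).nonempty, by fun_prop, isOpenMap_fiberProduct_fst hf hgopen⟩
  exact isConnected_iff_connectedSpace.2 (hp.isQuotientMap.isCoinducing.connectedSpace hpfib)

/-- If `f : X → S` is continuous, `g : Y → S` is a continuous surjective open map
with connected fibres, and `X` is connected, then the topological fibre product
`X ×_S Y = {(x, y) | f x = g y}` (with the subspace topology of `X × Y`) is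
connected. -/
theorem isConnected_fiberProduct {X Y S : Type*} [TopologicalSpace X]
    [TopologicalSpace Y] [TopologicalSpace S] {f : X → S} {g : Y → S}
    (hf : Continuous f) (hg : Continuous g) (hgsurj : Function.Surjective g)
    (hgopen : IsOpenMap g) (hfib : ∀ s : S, IsConnected (g ⁻¹' {s}))
    (hX : ConnectedSpace X) :
    IsConnected {p : X × Y | f p.1 = g p.2} :=
  isConnected_fiberProduct_general hf hgopen hfib hX
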